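/- arXiv:1305.0433 — 3 statements merged into one kernel-verified Lean document; each statement's English description precedes it below -/
import Mathlib

section
/- Let C be a vertex cover of a graph G=(V,E). A three-partition (L^C,X^C,R^C) of C is the trace on C of some node of some rooted tree decomposition of G if and only if X^C separates L^C from R^C in the induced subgraph G[C]; moreover, in that case (L^C,X^C,R^C) is also the trace on C of some node of some rooted path decomposition of G. -/
open scoped Classical

noncomputable section

/-- Operations labelling the nodes of a nice tree decomposition.  For a `join`
we record the trace of the bag on the vertex cover together with the traces of
the lower sets of the two children. -/
inductive TDOp (V : Type) where
  | introduce (u : V)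
  | forget (u : V)
  | join (X L1 L2 : Set V)

/-- `i` is an ancestor of `j` (inclusively) with respect to the parent function `parent`. -/
def ancestorOf {ι : Type} (parent : ι → ι) (i j : ι) : Prop :=
  ∃ n : ℕ, parent^[n] j = i

/-- `k` lies on the unique tree path between `i` and `j` in the rooted tree given by `parent`. -/
def betweenNodes {ι : Type} (parent : ι → ι) (k i j : ι) : Prop :=
  (ancestorOf parent k i ∨ ancestorOf parent k j) ∧
    ∀ l, ancestorOf parent l i → ancestorOf parent l j → ancestorOf parent l k

/-- A rooted tree decomposition of a graph `G`, encoded via a parent function on the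
node set `ι`:  every node reaches the root by iterating `parent`; the bags cover the
vertices and the edges, and the set of bags containing a fixed vertex is connected
(it is closed under taking nodes on tree paths). -/
structure RootedTreeDecomp (V ι : Type) (G : SimpleGraph V) where
  root : ι
  parent : ι → ι
  parent_root : parent root = root
  reaches_root : ∀ i, ancestorOf parent root i
  bag : ι → Finset V
  bag_cover : ∀ v, ∃ i, v ∈ bag i
  bag_edge : ∀ u v, G.Adj u v → ∃ i, u ∈ bag i ∧ v ∈ bag i
  bag_conn : ∀ v i j k, v ∈ bag i → v ∈ bag j → betweenNodes parent k i j → v ∈ bag k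

namespace RootedTreeDecomp

variable {V ι : Type} {G : SimpleGraph V} (t : RootedTreeDecomp V ι G)

/-- `i` is an ancestor of `j` (inclusively). -/
def anc (i j : ι) : Prop := ancestorOf t.parent i j

/-- `V_i` : the union of the bags of the subtree rooted at `i`. -/
def subVerts (i : ι) : Set V := {v | ∃ j, t.anc i j ∧ v ∈ t.bag j}

/-- `L_i = V_i ∖ X_i`. -/
def Lset (i : ι) : Set V := t.subVerts i \ ↑(t.bag i)

/-- `R_i = V ∖ V_i`. -/
def Rset (i : ι) : Set V := Set.univ \ t.subVerts i

/-- The trace of node `i` on `C` is the three-partition `(L_i ∩ C, X_i ∩ C, R_i ∩ C)` of `C`. -/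
def HasTrace (C : Set V) (i : ι) (LC XC RC : Set V) : Prop :=
  LC = t.Lset i ∩ C ∧ XC = (↑(t.bag i) : Set V) ∩ C ∧ RC = t.Rset i ∩ C

/-- The children of a node. -/
def children (i : ι) : Set ι := {j | j ≠ t.root ∧ t.parent j = i}

/-- A leaf node: no children and a bag of size one. -/
def IsLeafNode (i : ι) : Prop := t.children i = ∅ ∧ ∃ u, t.bag i = {u}

/-- An introduce node. -/
def IsIntroduceNode [DecidableEq V] (i : ι) : Prop :=
  ∃ j u, t.children i = {j} ∧ u ∉ t.bag j ∧ t.bag i = insert u (t.bag j)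

/-- A forget node. -/
def IsForgetNode [DecidableEq V] (i : ι) : Prop :=
  ∃ j u, t.children i = {j} ∧ u ∈ t.bag j ∧ t.bag i = (t.bag j).erase u

/-- A join node. -/
def IsJoinNode (i : ι) : Prop :=
  ∃ j k, j ≠ k ∧ t.children i = ({j, k} : Set ι) ∧ t.bag j = t.bag i ∧ t.bag k = t.bag i

/-- A nice tree decomposition: every node is a leaf, introduce, forget or join node. -/
def IsNice [DecidableEq V] : Prop :=
  ∀ i, t.IsLeafNode i ∨ t.IsIntroduceNode i ∨ t.IsForgetNode i ∨ t.IsJoinNode i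

/-- A nice path decomposition: every node is a leaf, introduce or forget node. -/
def IsNicePath [DecidableEq V] : Prop :=
  ∀ i, t.IsLeafNode i ∨ t.IsIntroduceNode i ∨ t.IsForgetNode i

/-- The operation `op` is the operation `τ_i` performed at node `i`
(join operations are recorded through their traces on the vertex cover `C`). -/
def HasOp [DecidableEq V] (C : Set V) (i : ι) : TDOp V → Prop
  | TDOp.introduce u =>
      (t.children i = ∅ ∧ t.bag i = {u}) ∨
        ∃ j, t.children i = {j} ∧ u ∉ t.bag j ∧ t.bag i = insert u (t.bag j)
  | TDOp.forget u =>
      ∃ j, t.children i = {j} ∧ u ∈ t.bag j ∧ t.bag i = (t.bag j).erase u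
  | TDOp.join X L1 L2 =>
      ∃ j k, j ≠ k ∧ t.children i = ({j, k} : Set ι) ∧ t.bag j = t.bag i ∧ t.bag k = t.bag i ∧
        X = (↑(t.bag i) : Set V) ∩ C ∧ L1 = t.Lset j ∩ C ∧ L2 = t.Lset k ∩ C

/-- The width of a rooted tree decomposition: maximum bag size minus one. -/
def width [Fintype ι] : ℕ := (Finset.univ.sup fun i => (t.bag i).card) - 1

end RootedTreeDecomp

/-- A quintuple `(τ₋, L^C, X^C, R^C, τ₊)`. -/
structure TDQuint (V : Type) where
  tauL : TDOp V
  LC : Set V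
  XC : Set V
  RC : Set V
  tauR : TDOp V

/-- `C` is a vertex cover of `G`. -/
def IsVertexCover {V : Type} (G : SimpleGraph V) (C : Set V) : Prop :=
  ∀ u v, G.Adj u v → u ∈ C ∨ v ∈ C

/-- `X` separates `A` from `B` in the subgraph of `G` induced by `D`: there is no walk
between a vertex of `A` and a vertex of `B` all of whose vertices avoid `X` and stay in `D`. -/
def SeparatesIn {V : Type} (G : SimpleGraph V) (D X A B : Set V) : Prop :=
  ∀ a ∈ A, ∀ b ∈ B, ¬ ∃ p : G.Walk a b, ∀ v ∈ p.support, v ∈ D \ X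

/-- `(LC, XC, RC)` is a valid partition of `C`: it is the trace on `C` of some node of some
rooted tree decomposition of `G`. -/
def ValidPartition {V : Type} (G : SimpleGraph V) (C LC XC RC : Set V) : Prop :=
  ∃ (ι : Type) (t : RootedTreeDecomp V ι G) (i : ι), t.HasTrace C i LC XC RC

section

variable {V ι : Type} [DecidableEq V] {G : SimpleGraph V}

/-- The decomposition `t` respects the (non-degenerate) quintuple `Q`, with `imin` and `imax`
as lowest and highest nodes of the subpath of nodes whose trace on `C` is `(LC, XC, RC)`:
the operation at `imin` is `τ₋`, and the operation at the father of `imax` is `τ₊`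
(taken to be `forget w` on the root bag `{w}` when `imax` is the root). -/
def RespectsAtND (t : RootedTreeDecomp V ι G) (C : Set V) (Q : TDQuint V)
    (imin imax : ι) : Prop :=
  t.HasTrace C imin Q.LC Q.XC Q.RC ∧ t.HasTrace C imax Q.LC Q.XC Q.RC ∧ t.anc imax imin ∧
    (∀ i, t.HasTrace C i Q.LC Q.XC Q.RC → t.anc i imin ∧ t.anc imax i) ∧
    t.HasOp C imin Q.tauL ∧
    ((imax = t.root ∧ ∃ w, t.bag t.root = {w} ∧ Q.tauR = TDOp.forget w) ∨
      (imax ≠ t.root ∧ t.HasOp C (t.parent imax) Q.tauR))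

/-- The decomposition `t` respects the degenerate quintuple `Q` at node `i`: node `i` has
trace `(∅, XC, RC)` on `C` and its father performs the forget operation `τ₊`. -/
def RespectsAtDeg (t : RootedTreeDecomp V ι G) (C : Set V) (Q : TDQuint V) (i : ι) : Prop :=
  t.HasTrace C i Q.LC Q.XC Q.RC ∧
    ∃ u, Q.tauR = TDOp.forget u ∧ i ≠ t.root ∧ t.HasOp C (t.parent i) (TDOp.forget u)

/-- The decomposition `t` respects the quintuple `Q`, witnessed by the nodes `imin`, `imax`. -/
def RespectsAt (t : RootedTreeDecomp V ι G) (C : Set V) (Q : TDQuint V)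
    (imin imax : ι) : Prop :=
  (Q.LC ≠ ∅ ∧ RespectsAtND t C Q imin imax) ∨
    (Q.LC = ∅ ∧ imin = imax ∧ RespectsAtDeg t C Q imax)

/-- The decomposition `t` respects the quintuple `Q`. -/
def Respects (t : RootedTreeDecomp V ι G) (C : Set V) (Q : TDQuint V) : Prop :=
  ∃ imin imax, RespectsAt t C Q imin imax

end

/-- Valid quintuples (tree-decomposition version), including the degenerate ones. -/
def ValidQuintT {V : Type} [DecidableEq V] (G : SimpleGraph V) (C : Set V)
    (Q : TDQuint V) : Prop :=
  (Q.LC ≠ ∅ ∧ ∃ (ι : Type) (t : RootedTreeDecomp V ι G), t.IsNice ∧ Respects t C Q) ∨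
    (Q.LC = ∅ ∧ ValidPartition G C ∅ Q.XC Q.RC ∧
      ∃ u, u ∈ Q.XC ∧ G.neighborSet u ⊆ Q.XC ∧ Q.tauR = TDOp.forget u)

/-- Valid quintuples (path-decomposition version): `Q` is respected by some nice path
decomposition of `G`. -/
def ValidQuintP {V : Type} [DecidableEq V] (G : SimpleGraph V) (C : Set V)
    (Q : TDQuint V) : Prop :=
  ∃ (ι : Type) (t : RootedTreeDecomp V ι G), t.IsNicePath ∧
    ∃ imin imax, RespectsAtND t C Q imin imax

section

variable {V : Type} [DecidableEq V]

/-- `XTR^S(Q)`: vertices of `S = V ∖ C` having neighbours in both `L^C` and `R^C`. -/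
def XTRset (G : SimpleGraph V) (C : Set V) (Q : TDQuint V) : Set V :=
  {x | x ∉ C ∧ (G.neighborSet x ∩ Q.LC).Nonempty ∧ (G.neighborSet x ∩ Q.RC).Nonempty}

/-- `XL^S(Q)`. -/
def XLset (G : SimpleGraph V) (C : Set V) (Q : TDQuint V) : Set V :=
  match Q.tauL with
  | TDOp.introduce u =>
      {x | x ∉ C ∧ G.neighborSet x ⊆ Q.LC ∪ Q.XC ∧ u ∈ G.neighborSet x ∧
        (G.neighborSet x ∩ Q.LC).Nonempty}
  | TDOp.forget _ => ∅
  | TDOp.join _ L1 L2 =>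
      {x | x ∉ C ∧ (G.neighborSet x ∩ L1).Nonempty ∧ (G.neighborSet x ∩ L2).Nonempty ∧
        G.neighborSet x ∩ Q.RC = ∅}

/-- `XR^S(Q)`. -/
def XRset (G : SimpleGraph V) (C : Set V) (Q : TDQuint V) : Set V :=
  match Q.tauR with
  | TDOp.forget v =>
      {x | x ∉ C ∧ G.neighborSet x ⊆ Q.RC ∪ Q.XC ∧ v ∈ G.neighborSet x ∧
        (G.neighborSet x ∩ Q.RC).Nonempty}
  | _ => ∅

/-- `ε(Q)` (treewidth version): `1` if some vertex of `S` has neighbourhood exactly `X^C`. -/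
def epsT (G : SimpleGraph V) (C : Set V) (Q : TDQuint V) : ℕ :=
  if ∃ x, x ∉ C ∧ G.neighborSet x = Q.XC then 1 else 0

/-- The local treewidth of a quintuple. -/
def loctw (G : SimpleGraph V) (C : Set V) (Q : TDQuint V) : ℕ :=
  Q.XC.ncard +
    max (max ((XTRset G C Q).ncard + (XLset G C Q).ncard)
      ((XTRset G C Q).ncard + (XRset G C Q).ncard)) (epsT G C Q) - 1

/-- Fuelled version of the partial treewidth recursion. -/
def ptwAux (G : SimpleGraph V) (C : Set V) : ℕ → TDQuint V → ℕ
  | 0, Q => loctw G C Q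
  | m + 1, Q =>
    if Q.LC = ∅ then loctw G C Q
    else
      match Q.tauL with
      | TDOp.introduce u =>
          max (loctw G C Q)
            (sInf {n | ∃ τ,
              ValidQuintT G C ⟨τ, Q.LC, Q.XC \ {u}, Q.RC ∪ {u}, TDOp.introduce u⟩ ∧
              n = ptwAux G C m ⟨τ, Q.LC, Q.XC \ {u}, Q.RC ∪ {u}, TDOp.introduce u⟩})
      | TDOp.forget u =>
          max (loctw G C Q)
            (sInf {n | ∃ τ,
              ValidQuintT G C ⟨τ, Q.LC \ {u}, Q.XC ∪ {u}, Q.RC, TDOp.forget u⟩ ∧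
              n = ptwAux G C m ⟨τ, Q.LC \ {u}, Q.XC ∪ {u}, Q.RC, TDOp.forget u⟩})
      | TDOp.join _ L1 L2 =>
          max (loctw G C Q)
            (max
              (sInf {n | ∃ τ,
                ValidQuintT G C ⟨τ, L1, Q.XC, Q.RC ∪ L2, TDOp.join Q.XC L1 L2⟩ ∧
                n = ptwAux G C m ⟨τ, L1, Q.XC, Q.RC ∪ L2, TDOp.join Q.XC L1 L2⟩})
              (sInf {n | ∃ τ,
                ValidQuintT G C ⟨τ, L2, Q.XC, Q.RC ∪ L1, TDOp.join Q.XC L1 L2⟩ ∧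
                n = ptwAux G C m ⟨τ, L2, Q.XC, Q.RC ∪ L1, TDOp.join Q.XC L1 L2⟩}))

/-- The partial treewidth `ptw(Q)` of a quintuple (defined with sufficient fuel:
each recursive step strictly decreases `2·|L^C| + |X^C|`). -/
def ptw (G : SimpleGraph V) (C : Set V) (Q : TDQuint V) : ℕ :=
  ptwAux G C (2 * Q.LC.ncard + Q.XC.ncard) Q

/-- `X^C_-` : the bag trace just below `imin`. -/
def XCminus (Q : TDQuint V) : Set V :=
  match Q.tauL with
  | TDOp.introduce u => Q.XC \ {u}
  | TDOp.forget u => Q.XC ∪ {u}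
  | TDOp.join _ _ _ => Q.XC

/-- `X^C_+` : the bag trace just above `imax`. -/
def XCplus (Q : TDQuint V) : Set V :=
  match Q.tauR with
  | TDOp.introduce v => Q.XC ∪ {v}
  | TDOp.forget v => Q.XC \ {v}
  | TDOp.join _ _ _ => Q.XC

/-- `XF^S(Q)` (pathwidth version). -/
def XFPset (G : SimpleGraph V) (C : Set V) (Q : TDQuint V) : Set V :=
  {x | x ∉ C ∧ G.neighborSet x ⊆ Q.XC ∧
    (XCminus Q ⊂ Q.XC → ¬ G.neighborSet x ⊆ XCminus Q) ∧
    (XCplus Q ⊂ Q.XC → ¬ G.neighborSet x ⊆ XCplus Q)}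

/-- `ε(Q)` (pathwidth version). -/
def epsP (G : SimpleGraph V) (C : Set V) (Q : TDQuint V) : ℕ :=
  if (XFPset G C Q).Nonempty then 1 else 0

/-- The local pathwidth of a quintuple. -/
def locpw (G : SimpleGraph V) (C : Set V) (Q : TDQuint V) : ℕ :=
  Q.XC.ncard + (XTRset G C Q).ncard +
    max (max (XLset G C Q).ncard (XRset G C Q).ncard) (epsP G C Q) - 1

/-- Fuelled version of the partial pathwidth recursion. -/
def ppwAux (G : SimpleGraph V) (C : Set V) : ℕ → TDQuint V → ℕ
  | 0, Q => locpw G C Q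
  | m + 1, Q =>
    if ∃ u, Q.tauL = TDOp.introduce u ∧ Q.LC = ∅ ∧ Q.XC = {u} ∧ Q.RC = C \ {u} then
      locpw G C Q
    else
      match Q.tauL with
      | TDOp.introduce u =>
          max (locpw G C Q)
            (sInf {n | ∃ τ,
              ValidQuintP G C ⟨τ, Q.LC, Q.XC \ {u}, Q.RC ∪ {u}, TDOp.introduce u⟩ ∧
              n = ppwAux G C m ⟨τ, Q.LC, Q.XC \ {u}, Q.RC ∪ {u}, TDOp.introduce u⟩})
      | TDOp.forget u =>
          max (locpw G C Q)
            (sInf {n | ∃ τ,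
              ValidQuintP G C ⟨τ, Q.LC \ {u}, Q.XC ∪ {u}, Q.RC, TDOp.forget u⟩ ∧
              n = ppwAux G C m ⟨τ, Q.LC \ {u}, Q.XC ∪ {u}, Q.RC, TDOp.forget u⟩})
      | TDOp.join _ _ _ => locpw G C Q

/-- The partial pathwidth `ppw(Q)` of a quintuple. -/
def ppw (G : SimpleGraph V) (C : Set V) (Q : TDQuint V) : ℕ :=
  ppwAux G C (2 * Q.LC.ncard + Q.XC.ncard) Q

end

end

/-!
A vertex of `L_i` has all its neighbours in `V_i`: otherwise an edge `uv` lies in a bag outside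
the subtree of `i`, and by connectivity `u` would lie in `X_i`. Hence a walk that starts in `L_i`
and avoids `X_i` never leaves `L_i`, so the trace `(L^C, X^C, R^C)` of any node is separated.
Conversely, separation only has to rule out edges between `L^C` and `R^C`, and then the
three-bag path `V ∖ L^C — V ∖ (L^C ∪ R^C) — V ∖ R^C` is a path decomposition whose middle node
has trace `(L^C, X^C, R^C)`.
-/

namespace RootedTreeDecomp

variable {V ι : Type} {G : SimpleGraph V} (t : RootedTreeDecomp V ι G)

def IsPathDecomp : Prop :=
  ∀ j k, j ≠ t.root → k ≠ t.root → t.parent j = t.parent k → j = k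

theorem anc_trans {i j k : ι} (hij : t.anc i j) (hjk : t.anc j k) : t.anc i k := by
  obtain ⟨m, hm⟩ := hij
  obtain ⟨n, hn⟩ := hjk
  exact ⟨m + n, by rw [Function.iterate_add_apply, hn, hm]⟩

theorem anc_total_of_anc {i j k : ι} (hik : t.anc i k) (hjk : t.anc j k) :
    t.anc i j ∨ t.anc j i := by
  obtain ⟨m, hm⟩ := hik
  obtain ⟨n, hn⟩ := hjk
  rcases le_total n m with h | h
  · refine Or.inl ⟨m - n, ?_⟩
    rw [← hn, ← Function.iterate_add_apply, Nat.sub_add_cancel h, hm]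
  · refine Or.inr ⟨n - m, ?_⟩
    rw [← hm, ← Function.iterate_add_apply, Nat.sub_add_cancel h, hn]

theorem mem_subVerts_of_adj {i : ι} {u v : V} (hu : u ∈ t.Lset i) (huv : G.Adj u v) :
    v ∈ t.subVerts i := by
  obtain ⟨j, huj, hvj⟩ := t.bag_edge u v huv
  by_cases hij : t.anc i j
  · exact ⟨j, hij, hvj⟩
  obtain ⟨⟨j', hij', huj'⟩, hui⟩ := hu
  have hbetween : betweenNodes t.parent i j' j := by
    refine ⟨Or.inl hij', fun l hlj' hlj => ?_⟩
    rcases t.anc_total_of_anc hij' hlj' with hil | hli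
    · exact absurd (t.anc_trans hil hlj) hij
    · exact hli
  exact absurd (t.bag_conn u j' j i huj' huj hbetween) hui

theorem mem_Lset_of_walk {i : ι} {a b : V} (p : G.Walk a b)
    (hp : ∀ v ∈ p.support, v ∉ t.bag i) (ha : a ∈ t.Lset i) : b ∈ t.Lset i := by
  induction p with
  | nil => exact ha
  | cons hadj p ih =>
    rw [SimpleGraph.Walk.support_cons, List.forall_mem_cons] at hp
    exact ih hp.2 ⟨t.mem_subVerts_of_adj ha hadj, hp.2 _ p.start_mem_support⟩

theorem separatesIn_of_hasTrace {C LC XC RC : Set V} {i : ι}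
    (h : t.HasTrace C i LC XC RC) : SeparatesIn G C XC LC RC := by
  obtain ⟨rfl, rfl, rfl⟩ := h
  rintro a ⟨ha, -⟩ b ⟨⟨-, hb⟩, -⟩ ⟨p, hp⟩
  exact hb (t.mem_Lset_of_walk p (fun v hv hvi => (hp v hv).2 ⟨hvi, (hp v hv).1⟩) ha).1

end RootedTreeDecomp

-- Truncated subtraction makes `0` its own parent, i.e. the root.
def pathParent (n : ℕ) (i : Fin n) : Fin n := ⟨i - 1, by omega⟩

theorem val_iterate_pathParent (n m : ℕ) (i : Fin n) :
    ((pathParent n)^[m] i).val = i.val - m := by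
  induction m with
  | zero => rfl
  | succ m ih =>
    rw [Function.iterate_succ_apply']
    change ((pathParent n)^[m] i).val - 1 = _
    omega

theorem ancestorOf_pathParent_iff {n : ℕ} {k i : Fin n} :
    ancestorOf (pathParent n) k i ↔ k ≤ i := by
  constructor
  · rintro ⟨m, rfl⟩
    rw [Fin.le_iff_val_le_val, val_iterate_pathParent]
    omega
  · intro hki
    refine ⟨i.val - k.val, Fin.ext ?_⟩
    rw [val_iterate_pathParent]
    exact Nat.sub_sub_self hki

theorem betweenNodes_pathParent {n : ℕ} {k i j : Fin n}
    (h : betweenNodes (pathParent n) k i j) : min i j ≤ k ∧ k ≤ max i j := by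
  simp only [betweenNodes, ancestorOf_pathParent_iff] at h
  exact ⟨h.2 _ (min_le_left i j) (min_le_right i j), le_max_iff.2 h.1⟩

namespace RootedTreeDecomp

variable {V : Type} {G : SimpleGraph V}

def ofPath (n : ℕ) (bag : Fin (n + 1) → Finset V) (cover : ∀ v, ∃ i, v ∈ bag i)
    (edge : ∀ u v, G.Adj u v → ∃ i, u ∈ bag i ∧ v ∈ bag i)
    (convex : ∀ v i j k, i ≤ k → k ≤ j → v ∈ bag i → v ∈ bag j → v ∈ bag k) :
    RootedTreeDecomp V (Fin (n + 1)) G where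
  root := 0
  parent := pathParent (n + 1)
  parent_root := Fin.ext (by simp [pathParent])
  reaches_root _ := ancestorOf_pathParent_iff.2 (Fin.zero_le _)
  bag := bag
  bag_cover := cover
  bag_edge := edge
  bag_conn v i j k hi hj hk := by
    obtain ⟨hmin, hmax⟩ := betweenNodes_pathParent hk
    rcases le_total i j with h | h
    · rw [min_eq_left h, max_eq_right h] at *
      exact convex v i j k hmin hmax hi hj
    · rw [min_eq_right h, max_eq_left h] at *
      exact convex v j i k hmin hmax hj hi

variable {n : ℕ} {bag : Fin (n + 1) → Finset V} {cover : ∀ v, ∃ i, v ∈ bag i}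
  {edge : ∀ u v, G.Adj u v → ∃ i, u ∈ bag i ∧ v ∈ bag i}
  {convex : ∀ v i j k, i ≤ k → k ≤ j → v ∈ bag i → v ∈ bag j → v ∈ bag k}

theorem isPathDecomp_ofPath : (ofPath n bag cover edge convex).IsPathDecomp := by
  intro j k (hj : j ≠ 0) (hk : k ≠ 0) hjk
  rw [← Fin.pos_iff_ne_zero'] at hj hk
  simp only [ofPath, pathParent, Fin.ext_iff] at hjk
  exact Fin.ext (by omega)

theorem mem_subVerts_ofPath {i : Fin (n + 1)} {v : V} :
    v ∈ (ofPath n bag cover edge convex).subVerts i ↔ ∃ j, i ≤ j ∧ v ∈ bag j := by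
  simp only [subVerts, anc, ofPath, ancestorOf_pathParent_iff, Set.mem_ofPred_eq]

end RootedTreeDecomp

theorem SeparatesIn.not_adj {V : Type} {G : SimpleGraph V} {D X A B : Set V}
    (h : SeparatesIn G D X A B) {a b : V} (ha : a ∈ A) (hb : b ∈ B) (ha' : a ∈ D \ X)
    (hb' : b ∈ D \ X) : ¬ G.Adj a b := fun hab =>
  h a ha b hb ⟨hab.toWalk, by simpa [hab.support_toWalk] using ⟨ha', hb'⟩⟩

theorem exists_pathDecomp_of_not_adj {V : Type} [Fintype V] {G : SimpleGraph V} {L R : Set V}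
    (hLR : Disjoint L R) (hadj : ∀ u ∈ L, ∀ v ∈ R, ¬ G.Adj u v) :
    ∃ t : RootedTreeDecomp V (Fin 3) G, t.IsPathDecomp ∧
      t.Lset 1 = L ∧ (t.bag 1 : Set V) = (L ∪ R)ᶜ ∧ t.Rset 1 = R := by
  let bag : Fin 3 → Finset V := ![Lᶜ.toFinset, (L ∪ R)ᶜ.toFinset, Rᶜ.toFinset]
  have notR_of_L : ∀ v ∈ L, v ∉ R := fun _ hv => Set.disjoint_left.1 hLR hv
  have cover : ∀ v, ∃ i, v ∈ bag i := by
    intro v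
    by_cases hv : v ∈ L
    · exact ⟨2, by simpa [bag] using notR_of_L v hv⟩
    · exact ⟨0, by simpa [bag] using hv⟩
  have edge : ∀ u v, G.Adj u v → ∃ i, u ∈ bag i ∧ v ∈ bag i := by
    intro u v huv
    by_cases hu : u ∈ L
    · exact ⟨2, by simpa [bag] using ⟨notR_of_L u hu, fun hv => hadj u hu v hv huv⟩⟩
    by_cases hv : v ∈ L
    · exact ⟨2, by simpa [bag] using ⟨fun hu => hadj v hv u hu huv.symm, notR_of_L v hv⟩⟩
    · exact ⟨0, by simpa [bag] using ⟨hu, hv⟩⟩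
  have convex : ∀ v i j k, i ≤ k → k ≤ j → v ∈ bag i → v ∈ bag j → v ∈ bag k := by
    intro v i j k hik hkj
    fin_cases i <;> fin_cases j <;> fin_cases k <;> simp_all [bag]
  let t := RootedTreeDecomp.ofPath 2 bag cover edge convex
  have hsub : t.subVerts 1 = Rᶜ := by
    ext v
    rw [RootedTreeDecomp.mem_subVerts_ofPath]
    refine ⟨fun ⟨j, h1j, hvj⟩ => ?_, fun hv => ⟨2, by decide, by simpa [bag] using hv⟩⟩
    fin_cases j <;> simp_all [bag]
  have hbag : (t.bag 1 : Set V) = (L ∪ R)ᶜ := by simp [t, RootedTreeDecomp.ofPath, bag]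
  refine ⟨t, RootedTreeDecomp.isPathDecomp_ofPath, ?_, hbag, ?_⟩
  · rw [RootedTreeDecomp.Lset, hsub, hbag]
    ext v
    have := notR_of_L v
    simp only [Set.mem_sdiff, Set.mem_compl_iff, Set.mem_union]
    tauto
  · rw [RootedTreeDecomp.Rset, hsub]
    simp

theorem SeparatesIn.exists_pathDecomp_hasTrace {V : Type} [Fintype V] {G : SimpleGraph V}
    {C LC XC RC : Set V} (hU : LC ∪ XC ∪ RC = C) (h1 : Disjoint LC XC) (h2 : Disjoint LC RC)
    (h3 : Disjoint XC RC) (hsep : SeparatesIn G C XC LC RC) :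
    ∃ t : RootedTreeDecomp V (Fin 3) G, t.IsPathDecomp ∧ t.HasTrace C 1 LC XC RC := by
  subst hU
  have hL : ∀ u ∈ LC, u ∈ (LC ∪ XC ∪ RC) \ XC := fun u hu =>
    ⟨Or.inl (Or.inl hu), Set.disjoint_left.1 h1 hu⟩
  have hR : ∀ v ∈ RC, v ∈ (LC ∪ XC ∪ RC) \ XC := fun v hv =>
    ⟨Or.inr hv, Set.disjoint_right.1 h3 hv⟩
  obtain ⟨t, ht, htL, htX, htR⟩ := exists_pathDecomp_of_not_adj h2 fun u hu v hv =>
    hsep.not_adj hu hv (hL u hu) (hR v hv)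
  refine ⟨t, ht, ?_, ?_, ?_⟩
  · rw [htL, Set.inter_eq_left.2 (Set.subset_union_left.trans Set.subset_union_left)]
  · ext x
    have hxL : x ∈ LC → x ∉ XC := fun h => Set.disjoint_left.1 h1 h
    have hxR : x ∈ XC → x ∉ RC := fun h => Set.disjoint_left.1 h3 h
    rw [htX]
    simp only [Set.mem_inter_iff, Set.mem_compl_iff, Set.mem_union]
    tauto
  · rw [htR, Set.inter_eq_left.2 Set.subset_union_right]

theorem validPartition_iff_separates_general {V : Type} [Fintype V]
    (G : SimpleGraph V) (C : Set V)
    (LC XC RC : Set V) (hU : LC ∪ XC ∪ RC = C)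
    (h1 : Disjoint LC XC) (h2 : Disjoint LC RC) (h3 : Disjoint XC RC) :
    (ValidPartition G C LC XC RC ↔ SeparatesIn G C XC LC RC) ∧
      (ValidPartition G C LC XC RC →
        ∃ (ι : Type) (t : RootedTreeDecomp V ι G) (i : ι),
          (∀ j k, j ≠ t.root → k ≠ t.root → t.parent j = t.parent k → j = k) ∧
            t.HasTrace C i LC XC RC) := by
  have hvalid_iff : ValidPartition G C LC XC RC ↔ SeparatesIn G C XC LC RC := by
    refine ⟨fun ⟨_, t, _, ht⟩ => t.separatesIn_of_hasTrace ht, fun hsep => ?_⟩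
    obtain ⟨t, -, ht⟩ := hsep.exists_pathDecomp_hasTrace hU h1 h2 h3
    exact ⟨Fin 3, t, 1, ht⟩
  refine ⟨hvalid_iff, fun hvalid => ?_⟩
  obtain ⟨t, hpath, ht⟩ := (hvalid_iff.1 hvalid).exists_pathDecomp_hasTrace hU h1 h2 h3
  exact ⟨Fin 3, t, 1, hpath, ht⟩

theorem validPartition_iff_separates {V : Type} [Fintype V] [DecidableEq V]
    (G : SimpleGraph V) (C : Set V) (hC : IsVertexCover G C)
    (LC XC RC : Set V) (hU : LC ∪ XC ∪ RC = C)
    (h1 : Disjoint LC XC) (h2 : Disjoint LC RC) (h3 : Disjoint XC RC) :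
    (ValidPartition G C LC XC RC ↔ SeparatesIn G C XC LC RC) ∧
      (ValidPartition G C LC XC RC →
        ∃ (ι : Type) (t : RootedTreeDecomp V ι G) (i : ι),
          (∀ j k, j ≠ t.root → k ≠ t.root → t.parent j = t.parent k → j = k) ∧
            t.HasTrace C i LC XC RC) :=
  validPartition_iff_separates_general G C LC XC RC hU h1 h2 h3
end

section
/- Let C be a vertex cover of a graph G and let (T,𝒳) be a nice tree decomposition of G. Suppose a node j of T and its father i have distinct traces (L_j^C,X_j^C,R_j^C) and (L_i^C,X_i^C,R_i^C) on C. Then either L_j^C ⊊ L_i^C, or L_j^C = L_i^C and X_j^C ⊊ X_i^C. -/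
open scoped Classical

namespace RootedTreeDecomp

variable {V ι : Type} {G : SimpleGraph V}

lemma iter_root (t : RootedTreeDecomp V ι G) (a : ℕ) : t.parent^[a] t.root = t.root :=
  Function.iterate_fixed t.parent_root a

lemma anc_refl (t : RootedTreeDecomp V ι G) (i : ι) : t.anc i i := ⟨0, rfl⟩

lemma anc_trans_s3 (t : RootedTreeDecomp V ι G) {a b c : ι} (h1 : t.anc a b) (h2 : t.anc b c) :
    t.anc a c := by
  obtain ⟨m, hm⟩ := h1; obtain ⟨n, hn⟩ := h2
  exact ⟨m + n, by rw [Function.iterate_add_apply, hn, hm]⟩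

lemma cycle_root (t : RootedTreeDecomp V ι G) {j : ι} {m : ℕ} (hm : 0 < m)
    (h : t.parent^[m] j = j) : j = t.root := by
  obtain ⟨n, hn⟩ := t.reaches_root j
  have hkm : ∀ k, t.parent^[k * m] j = j := by
    intro k
    induction k with
    | zero => simp
    | succ k ih =>
      rw [Nat.succ_mul, Function.iterate_add_apply, h, ih]
  have hle : n ≤ n * m := Nat.le_mul_of_pos_right n hm
  have h2 : t.parent^[n * m - n + n] j = j := by rw [Nat.sub_add_cancel hle]; exact hkm n
  rw [Function.iterate_add_apply, hn, t.iter_root] at h2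
  exact h2.symm

lemma anc_linear (t : RootedTreeDecomp V ι G) {a b k : ι} (ha : t.anc a k) (hb : t.anc b k) :
    t.anc a b ∨ t.anc b a := by
  obtain ⟨p, hp⟩ := ha; obtain ⟨q, hq⟩ := hb
  rcases le_total p q with h | h
  · right
    refine ⟨q - p, ?_⟩
    rw [← hp, ← Function.iterate_add_apply, Nat.sub_add_cancel h, hq]
  · left
    refine ⟨p - q, ?_⟩
    rw [← hq, ← Function.iterate_add_apply, Nat.sub_add_cancel h, hp]

lemma bag_subset_subVerts (t : RootedTreeDecomp V ι G) (i : ι) :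
    (↑(t.bag i) : Set V) ⊆ t.subVerts i :=
  fun v hv => ⟨i, t.anc_refl i, hv⟩

lemma Lset_mono (t : RootedTreeDecomp V ι G) {i j : ι} (hjr : j ≠ t.root)
    (hp : t.parent j = i) : t.Lset j ⊆ t.Lset i := by
  rintro v ⟨⟨k, hjk, hvk⟩, hvj⟩
  have hij : t.anc i j := ⟨1, by simpa using hp⟩
  refine ⟨⟨k, t.anc_trans_s3 hij hjk, hvk⟩, ?_⟩
  intro hvi
  apply hvj
  show v ∈ (t.bag j : Finset V)
  apply t.bag_conn v k i j hvk hvi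
  refine ⟨Or.inl hjk, ?_⟩
  intro l hlk hli
  rcases t.anc_linear hlk hjk with h | h
  · exact h
  · obtain ⟨s, hs⟩ := h
    obtain ⟨r, hr⟩ := hli
    exfalso
    apply hjr
    apply t.cycle_root (m := s + r + 1) (by omega)
    rw [show s + r + 1 = s + (r + 1) from rfl, Function.iterate_add_apply,
      Function.iterate_succ_apply, hp, hr, hs]

lemma subVerts_eq_union (t : RootedTreeDecomp V ι G) (i : ι) :
    t.subVerts i = t.Lset i ∪ (↑(t.bag i) : Set V) := by
  ext v
  constructor
  · intro hv
    by_cases hb : v ∈ (↑(t.bag i) : Set V)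
    · exact Or.inr hb
    · exact Or.inl ⟨hv, hb⟩
  · rintro (⟨hv, _⟩ | hv)
    · exact hv
    · exact t.bag_subset_subVerts i hv

lemma Rset_inter_eq (t : RootedTreeDecomp V ι G) (i : ι) (C : Set V) :
    t.Rset i ∩ C = C \ (t.Lset i ∩ C ∪ (↑(t.bag i) : Set V) ∩ C) := by
  ext v
  simp only [Rset, Set.mem_inter_iff, Set.mem_diff, Set.mem_union, Set.mem_univ, true_and]
  constructor
  · rintro ⟨hv, hc⟩
    refine ⟨hc, ?_⟩
    rintro (⟨⟨hs, _⟩, _⟩ | ⟨hb, _⟩)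
    · exact hv hs
    · exact hv (t.bag_subset_subVerts i hb)
  · rintro ⟨hc, hn⟩
    refine ⟨fun hs => ?_, hc⟩
    rw [t.subVerts_eq_union i] at hs
    rcases hs with h | h
    · exact hn (Or.inl ⟨h, hc⟩)
    · exact hn (Or.inr ⟨h, hc⟩)

end RootedTreeDecomp

theorem trace_precedence {V ι : Type} [Fintype V] [DecidableEq V]
    {G : SimpleGraph V} (C : Set V) (hC : IsVertexCover G C)
    (t : RootedTreeDecomp V ι G) (ht : t.IsNice)
    (i j : ι) (hjr : j ≠ t.root) (hp : t.parent j = i)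
    (hne : ¬ (t.Lset j ∩ C = t.Lset i ∩ C ∧
      (↑(t.bag j) : Set V) ∩ C = (↑(t.bag i) : Set V) ∩ C ∧
      t.Rset j ∩ C = t.Rset i ∩ C)) :
    t.Lset j ∩ C ⊂ t.Lset i ∩ C ∨
      (t.Lset j ∩ C = t.Lset i ∩ C ∧
        (↑(t.bag j) : Set V) ∩ C ⊂ (↑(t.bag i) : Set V) ∩ C) := by
  have hLsub : t.Lset j ∩ C ⊆ t.Lset i ∩ C :=
    fun v hv => ⟨t.Lset_mono hjr hp hv.1, hv.2⟩
  by_cases hL : t.Lset j ∩ C = t.Lset i ∩ C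
  · right
    refine ⟨hL, ?_⟩
    have hXne : (↑(t.bag j) : Set V) ∩ C ≠ (↑(t.bag i) : Set V) ∩ C := by
      intro hX
      exact hne ⟨hL, hX, by rw [t.Rset_inter_eq, t.Rset_inter_eq, hL, hX]⟩
    have hjch : j ∈ t.children i := ⟨hjr, hp⟩
    have hij : t.anc i j := ⟨1, by simpa using hp⟩
    rcases ht i with hleaf | hintro | hforget | hjoin
    · rw [hleaf.1] at hjch
      exact absurd hjch (Set.notMem_empty j)
    · obtain ⟨j', u, hch, hu, hbag⟩ := hintro
      rw [hch] at hjch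
      have hjj : j = j' := hjch
      subst hjj
      have hsub : (↑(t.bag j) : Set V) ∩ C ⊆ (↑(t.bag i) : Set V) ∩ C := by
        rintro v ⟨hv1, hv2⟩
        have hv1' : v ∈ t.bag j := hv1
        refine ⟨?_, hv2⟩
        simp [hbag, hv1']
      exact hsub.ssubset_of_ne hXne
    · obtain ⟨j', u, hch, hu, hbag⟩ := hforget
      rw [hch] at hjch
      have hjj : j = j' := hjch
      subst hjj
      exfalso
      have huC : u ∉ C := by
        intro huc
        have hui : u ∈ t.Lset i ∩ C := by
          refine ⟨⟨⟨j, hij, hu⟩, ?_⟩, huc⟩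
          simp [hbag]
        rw [← hL] at hui
        exact hui.1.2 hu
      apply hXne
      ext v
      simp only [Set.mem_inter_iff, Finset.coe_sort_coe, Set.mem_setOf_eq, Finset.mem_coe]
      constructor
      · rintro ⟨hv1, hv2⟩
        refine ⟨?_, hv2⟩
        rw [hbag]
        exact Finset.mem_erase.mpr ⟨fun h => huC (h ▸ hv2), hv1⟩
      · rintro ⟨hv1, hv2⟩
        rw [hbag] at hv1
        exact ⟨Finset.mem_of_mem_erase hv1, hv2⟩
    · obtain ⟨j1, j2, hnejk, hch, hb1, hb2⟩ := hjoin
      exfalso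
      apply hXne
      rw [hch] at hjch
      rcases hjch with h | h
      · rw [show j = j1 from h, hb1]
      · rw [show j = j2 from h, hb2]
  · left
    exact hLsub.ssubset_of_ne hL
end

section
/- Let Q=(τ−,L^C,X^C,R^C,τ+) be a valid quintuple for a graph G with vertex cover C, and let (T,𝒳) be a nice tree decomposition of G respecting Q. Then (T,𝒳) has a bag of size at least |X^C|+ε(Q), where ε(Q)=1 if some vertex x∈S=V∖C satisfies N(x)=X^C and ε(Q)=0 otherwise. -/
open scoped Classical

section Aux

open scoped Classical

variable {V ι : Type} {G : SimpleGraph V} (t : RootedTreeDecomp V ι G)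

lemma anc_refl' (a : ι) : t.anc a a := ⟨0, rfl⟩

lemma anc_trans' {a b c : ι} (h1 : t.anc a b) (h2 : t.anc b c) : t.anc a c := by
  obtain ⟨m, hm⟩ := h1; obtain ⟨n, hn⟩ := h2
  exact ⟨m + n, by rw [Function.iterate_add_apply, hn, hm]⟩

lemma anc_chain' {a b c : ι} (h1 : t.anc a c) (h2 : t.anc b c) :
    t.anc a b ∨ t.anc b a := by
  obtain ⟨m, hm⟩ := h1; obtain ⟨n, hn⟩ := h2
  rcases le_total m n with h | h
  · exact Or.inr ⟨n - m, by rw [← hm, ← Function.iterate_add_apply,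
      Nat.sub_add_cancel h, hn]⟩
  · exact Or.inl ⟨m - n, by rw [← hn, ← Function.iterate_add_apply,
      Nat.sub_add_cancel h, hm]⟩

lemma iter_anc' (a : ι) (n : ℕ) : t.anc (t.parent^[n] a) a := ⟨n, rfl⟩

lemma iter_iter' (a : ι) {m n : ℕ} (h : m ≤ n) :
    t.parent^[n - m] (t.parent^[m] a) = t.parent^[n] a := by
  rw [← Function.iterate_add_apply, Nat.sub_add_cancel h]

/-- Key construction: if every vertex of `S` lies in the bag of `i` and is adjacent to `x`,
then some bag contains `x` together with all of `S`. -/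
lemma exists_bag_with_star (x : V) (i : ι) (S : Set V)
    (hS : ∀ y ∈ S, y ∈ t.bag i ∧ G.Adj x y) :
    ∃ j, x ∈ t.bag j ∧ ∀ y ∈ S, y ∈ t.bag j := by
  by_cases hcase : ∃ n, x ∈ t.bag (t.parent^[n] i)
  · -- x appears in a bag weakly above i
    set n := Nat.find hcase with hn
    refine ⟨t.parent^[n] i, Nat.find_spec hcase, fun y hy => ?_⟩
    obtain ⟨hyi, hadj⟩ := hS y hy
    obtain ⟨jy, hxjy, hyjy⟩ := t.bag_edge x y hadj
    -- the level of the meet of jy and i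
    have hmex : ∃ m, t.anc (t.parent^[m] i) jy := by
      obtain ⟨k, hk⟩ := t.reaches_root i
      exact ⟨k, by rw [hk]; exact t.reaches_root jy⟩
    set m := Nat.find hmex with hm
    have hmspec : t.anc (t.parent^[m] i) jy := Nat.find_spec hmex
    have hnm : n ≤ m := by
      by_contra hlt
      push_neg at hlt
      -- then x is in the bag at level m (between jy and level n), contradicting minimality
      have hxl : x ∈ t.bag (t.parent^[m] i) := by
        refine t.bag_conn x jy (t.parent^[n] i) (t.parent^[m] i) hxjy
          (Nat.find_spec hcase) ⟨Or.inl hmspec, fun l' h1 h2 => ?_⟩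
        obtain ⟨k, hk⟩ := anc_trans' t h2 (iter_anc' t i n)
        have : m ≤ k := Nat.find_min' hmex (hk ▸ h1 : t.anc _ jy)
        exact ⟨k - m, by rw [iter_iter' t i this, hk]⟩
      exact absurd (Nat.find_min' hcase hxl) (by omega)
    refine t.bag_conn y jy i (t.parent^[n] i) hyjy hyi
      ⟨Or.inr (iter_anc' t i n), fun l' h1 h2 => ?_⟩
    obtain ⟨k, hk⟩ := h2
    have hmk : m ≤ k := Nat.find_min' hmex (hk ▸ h1 : t.anc _ jy)
    exact ⟨k - n, by rw [iter_iter' t i (le_trans hnm hmk), hk]⟩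
  · -- x never appears weakly above i
    push_neg at hcase
    rcases S.eq_empty_or_nonempty with hSe | ⟨y0, hy0⟩
    · obtain ⟨j, hj⟩ := t.bag_cover x
      exact ⟨j, hj, fun y hy => by rw [hSe] at hy; exact absurd hy (Set.notMem_empty y)⟩
    obtain ⟨hy0i, hadj0⟩ := hS y0 hy0
    obtain ⟨j0, hxj0, _⟩ := t.bag_edge x y0 hadj0
    obtain ⟨d0, hd0⟩ := t.reaches_root j0
    set P : ℕ → Prop := fun n => x ∈ t.bag (t.parent^[n] j0) with hP
    have hP0 : P 0 := hxj0
    set n' := Nat.findGreatest P d0 with hn'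
    have hPn' : P n' := Nat.findGreatest_spec (Nat.zero_le d0) hP0
    have hroots : ∀ s, t.parent^[s] t.root = t.root :=
      fun s => Function.iterate_fixed t.parent_root s
    have hnotroot : x ∉ t.bag t.root := by
      obtain ⟨k, hk⟩ := t.reaches_root i
      rw [← hk]; exact hcase k
    have hmax : ∀ m, P m → m ≤ n' := by
      intro m hPm
      by_contra hgt
      push_neg at hgt
      rcases le_or_gt m d0 with hle | hlt
      · exact Nat.findGreatest_is_greatest hgt hle hPm
      · have : t.parent^[m] j0 = t.root := by
          have := iter_iter' t j0 (le_of_lt hlt)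
          rw [hd0, hroots] at this; rw [← this]
        rw [hP] at hPm; simp only [this] at hPm
        exact hnotroot hPm
    have hnoanci : ¬ t.anc (t.parent^[n'] j0) i := by
      intro ⟨k, hk⟩
      exact hcase k (by rw [hk]; exact hPn')
    refine ⟨t.parent^[n'] j0, hPn', fun y hy => ?_⟩
    obtain ⟨hyi, hadj⟩ := hS y hy
    obtain ⟨jy, hxjy, hyjy⟩ := t.bag_edge x y hadj
    -- meet of j0 and jy
    have hmex : ∃ m, t.anc (t.parent^[m] j0) jy :=
      ⟨d0, by rw [hd0]; exact t.reaches_root jy⟩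
    set m := Nat.find hmex with hm
    have hmspec : t.anc (t.parent^[m] j0) jy := Nat.find_spec hmex
    have hxm : x ∈ t.bag (t.parent^[m] j0) := by
      refine t.bag_conn x j0 jy (t.parent^[m] j0) hxj0 hxjy
        ⟨Or.inl (iter_anc' t j0 m), fun l' h1 h2 => ?_⟩
      obtain ⟨k, hk⟩ := h1
      have : m ≤ k := Nat.find_min' hmex (hk ▸ h2 : t.anc _ jy)
      exact ⟨k - m, by rw [iter_iter' t j0 this, hk]⟩
    have hmn' : m ≤ n' := hmax m hxm
    have hancjy : t.anc (t.parent^[n'] j0) jy :=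
      anc_trans' t ⟨n' - m, iter_iter' t j0 hmn'⟩ hmspec
    refine t.bag_conn y jy i (t.parent^[n'] j0) hyjy hyi
      ⟨Or.inl hancjy, fun l' h1 h2 => ?_⟩
    rcases anc_chain' t h1 hancjy with h | h
    · exact h
    · exact absurd (anc_trans' t h h2) hnoanci

end Aux

theorem bag_of_size_eps {V ι : Type} [Fintype V] [DecidableEq V]
    (G : SimpleGraph V) (C : Set V) (hC : IsVertexCover G C)
    (Q : TDQuint V) (hQ : ValidQuintT G C Q)
    (t : RootedTreeDecomp V ι G) (ht : t.IsNice) (hresp : Respects t C Q) :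
    ∃ i, Q.XC.ncard + epsT G C Q ≤ (t.bag i).card := by
  classical
  -- extract a node whose trace on C is (LC, XC, RC)
  obtain ⟨imin, imax, hra⟩ := hresp
  have hnode : ∃ i, Q.XC = (↑(t.bag i) : Set V) ∩ C := by
    rcases hra with ⟨_, hND⟩ | ⟨_, _, hDeg⟩
    · exact ⟨imin, hND.1.2.1⟩
    · exact ⟨imax, hDeg.1.2.1⟩
  obtain ⟨i, hXC⟩ := hnode
  have hXCsub : Q.XC ⊆ ↑(t.bag i) := by rw [hXC]; exact Set.inter_subset_left
  have hXCC : Q.XC ⊆ C := by rw [hXC]; exact Set.inter_subset_right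
  unfold epsT
  split_ifs with hex
  · obtain ⟨x, hxC, hNx⟩ := hex
    obtain ⟨j, hxj, hj⟩ := exists_bag_with_star t x i Q.XC
      (fun y hy => ⟨hXCsub hy, by rw [← hNx] at hy; exact hy⟩)
    refine ⟨j, ?_⟩
    have hxnot : x ∉ Q.XC := fun h => hxC (hXCC h)
    have hsub : insert x Q.XC ⊆ ↑(t.bag j) := by
      intro v hv
      rcases hv with rfl | hv
      · exact hxj
      · exact hj v hv
    calc Q.XC.ncard + 1 = (insert x Q.XC).ncard := by
          rw [Set.ncard_insert_of_notMem hxnot (Set.toFinite _)]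
      _ ≤ (↑(t.bag j) : Set V).ncard := Set.ncard_le_ncard hsub (Set.toFinite _)
      _ = (t.bag j).card := Set.ncard_coe_finset _
  · refine ⟨i, ?_⟩
    calc Q.XC.ncard + 0 = Q.XC.ncard := by omega
      _ ≤ (↑(t.bag i) : Set V).ncard := Set.ncard_le_ncard hXCsub (Set.toFinite _)
      _ = (t.bag i).card := Set.ncard_coe_finset _
end
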